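/- Let H = H₁ ⊕ H₂ finite-dimensional with Ω = [[Ω₁, Γ],[Γ†, Ω₂]] self-adjoint, and suppose Ω̊Γ denotes the off-diagonal part [[0,Γ],[Γ†,0]]. Then H = O_Ω(range Ω̊Γ) holds whenever H₁ = O_{Ω₁}(range Γ) and H₂ = O_{Ω₂}(range Γ†); moreover O_Ω(range Ω̊Γ) = O_{Ω₁}(range Γ) ⊕ O_{Ω₂}(range Γ†) always. -/
import Mathlib


noncomputable section

open LinearMap Module

/-- The smallest `Ω`-invariant subspace containing a subset `S`. -/
def orbit {H : Type*} [NormedAddCommGroup H] [InnerProductSpace ℂ H]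
    (Ω : H →ₗ[ℂ] H) (S : Set H) : Submodule ℂ H :=
  sInf {W : Submodule ℂ H | S ⊆ (W : Set H) ∧ ∀ x ∈ W, Ω x ∈ W}

theorem orbit_invariant {H : Type*} [NormedAddCommGroup H] [InnerProductSpace ℂ H]
    (Ω : H →ₗ[ℂ] H) (S : Set H) : ∀ x ∈ orbit Ω S, Ω x ∈ orbit Ω S := by
  intro x hx
  simp only [orbit, Submodule.mem_sInf] at hx ⊢
  intro W hW
  exact hW.2 x (hx W hW)

variable (H₁ H₂ : Type*)
  [NormedAddCommGroup H₁] [InnerProductSpace ℂ H₁] [FiniteDimensional ℂ H₁]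
  [NormedAddCommGroup H₂] [InnerProductSpace ℂ H₂] [FiniteDimensional ℂ H₂]

/-- The orthogonal direct sum `H = H₁ ⊕ H₂`. -/
abbrev DirSum := WithLp 2 (H₁ × H₂)

/-- Isometric embedding of `H₁` into `H₁ ⊕ H₂`. -/
def emb1 : H₁ →ₗ[ℂ] DirSum H₁ H₂ :=
  (WithLp.linearEquiv 2 ℂ (H₁ × H₂)).symm.toLinearMap ∘ₗ LinearMap.inl ℂ H₁ H₂

/-- Isometric embedding of `H₂` into `H₁ ⊕ H₂`. -/
def emb2 : H₂ →ₗ[ℂ] DirSum H₁ H₂ :=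
  (WithLp.linearEquiv 2 ℂ (H₁ × H₂)).symm.toLinearMap ∘ₗ LinearMap.inr ℂ H₁ H₂

/-- Projection of `H₁ ⊕ H₂` onto the first coordinate. -/
def proj1 : DirSum H₁ H₂ →ₗ[ℂ] H₁ :=
  LinearMap.fst ℂ H₁ H₂ ∘ₗ (WithLp.linearEquiv 2 ℂ (H₁ × H₂)).toLinearMap

/-- Projection of `H₁ ⊕ H₂` onto the second coordinate. -/
def proj2 : DirSum H₁ H₂ →ₗ[ℂ] H₂ :=
  LinearMap.snd ℂ H₁ H₂ ∘ₗ (WithLp.linearEquiv 2 ℂ (H₁ × H₂)).toLinearMap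

/-- The copy of `H₁` inside `H₁ ⊕ H₂`. -/
def sub1 : Submodule ℂ (DirSum H₁ H₂) := LinearMap.range (emb1 H₁ H₂)

/-- The copy of `H₂` inside `H₁ ⊕ H₂`. -/
def sub2 : Submodule ℂ (DirSum H₁ H₂) := LinearMap.range (emb2 H₁ H₂)

variable {H₁ H₂}

/-- The block operator `Ω = [[Ω₁, Γ], [Γ†, Ω₂]]` acting on `H₁ ⊕ H₂` by
`Ω(v₁, v₂) = (Ω₁ v₁ + Γ v₂, Γ† v₁ + Ω₂ v₂)`. -/
def blockOp (Ω₁ : H₁ →ₗ[ℂ] H₁) (Ω₂ : H₂ →ₗ[ℂ] H₂) (Γ : H₂ →ₗ[ℂ] H₁) :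
    DirSum H₁ H₂ →ₗ[ℂ] DirSum H₁ H₂ :=
  emb1 H₁ H₂ ∘ₗ (Ω₁ ∘ₗ proj1 H₁ H₂ + Γ ∘ₗ proj2 H₁ H₂) +
    emb2 H₁ H₂ ∘ₗ (LinearMap.adjoint Γ ∘ₗ proj1 H₁ H₂ + Ω₂ ∘ₗ proj2 H₁ H₂)

lemma orbit_subset' {H : Type*} [NormedAddCommGroup H] [InnerProductSpace ℂ H]
    (Ω : H →ₗ[ℂ] H) (S : Set H) : S ⊆ (orbit Ω S : Set H) := by
  intro x hx
  simp only [orbit, Submodule.mem_sInf, SetLike.mem_coe]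
  intro W hW
  exact hW.1 hx

lemma orbit_le' {H : Type*} [NormedAddCommGroup H] [InnerProductSpace ℂ H]
    (Ω : H →ₗ[ℂ] H) (S : Set H) (W : Submodule ℂ H)
    (h1 : S ⊆ (W : Set H)) (h2 : ∀ x ∈ W, Ω x ∈ W) : orbit Ω S ≤ W :=
  sInf_le ⟨h1, h2⟩

@[simp] lemma proj1_emb1 (x : H₁) : proj1 H₁ H₂ (emb1 H₁ H₂ x) = x := rfl
@[simp] lemma proj2_emb1 (x : H₁) : proj2 H₁ H₂ (emb1 H₁ H₂ x) = 0 := rfl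
@[simp] lemma proj1_emb2 (y : H₂) : proj1 H₁ H₂ (emb2 H₁ H₂ y) = 0 := rfl
@[simp] lemma proj2_emb2 (y : H₂) : proj2 H₁ H₂ (emb2 H₁ H₂ y) = y := rfl

lemma emb_decomp (v : DirSum H₁ H₂) :
    emb1 H₁ H₂ (proj1 H₁ H₂ v) + emb2 H₁ H₂ (proj2 H₁ H₂ v) = v := by
  apply (WithLp.linearEquiv 2 ℂ (H₁ × H₂)).injective
  ext <;> simp [emb1, emb2, proj1, proj2]

lemma blockOp_apply (Ω₁ : H₁ →ₗ[ℂ] H₁) (Ω₂ : H₂ →ₗ[ℂ] H₂) (Γ : H₂ →ₗ[ℂ] H₁)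
    (v : DirSum H₁ H₂) :
    blockOp Ω₁ Ω₂ Γ v =
      emb1 H₁ H₂ (Ω₁ (proj1 H₁ H₂ v) + Γ (proj2 H₁ H₂ v)) +
        emb2 H₁ H₂ (LinearMap.adjoint Γ (proj1 H₁ H₂ v) + Ω₂ (proj2 H₁ H₂ v)) := rfl

/-- Let `Ω̊Γ = [[0, Γ], [Γ†, 0]]` be the off-diagonal (coupling) part of
`Ω = [[Ω₁, Γ], [Γ†, Ω₂]]`. Then `O_Ω(range Ω̊Γ) = O_{Ω₁}(range Γ) ⊕ O_{Ω₂}(range Γ†)`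
always, and `H = O_Ω(range Ω̊Γ)` whenever `H₁ = O_{Ω₁}(range Γ)` and
`H₂ = O_{Ω₂}(range Γ†)`. -/
theorem orbit_of_coupling_range
    (Ω₁ : H₁ →ₗ[ℂ] H₁) (hΩ₁ : Ω₁.IsSymmetric)
    (Ω₂ : H₂ →ₗ[ℂ] H₂) (hΩ₂ : Ω₂.IsSymmetric)
    (Γ : H₂ →ₗ[ℂ] H₁) :
    ((orbit Ω₁ (Set.range Γ) = ⊤ ∧ orbit Ω₂ (Set.range (LinearMap.adjoint Γ)) = ⊤) →
      orbit (blockOp Ω₁ Ω₂ Γ)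
        (LinearMap.range (blockOp 0 0 Γ) : Set (DirSum H₁ H₂)) = ⊤) ∧
    orbit (blockOp Ω₁ Ω₂ Γ) (LinearMap.range (blockOp 0 0 Γ) : Set (DirSum H₁ H₂))
      = Submodule.map (emb1 H₁ H₂) (orbit Ω₁ (Set.range Γ)) ⊔
          Submodule.map (emb2 H₁ H₂) (orbit Ω₂ (Set.range (LinearMap.adjoint Γ))) := by
  set V₁ := orbit Ω₁ (Set.range Γ) with hV₁
  set V₂ := orbit Ω₂ (Set.range (LinearMap.adjoint Γ)) with hV₂
  set O := orbit (blockOp Ω₁ Ω₂ Γ)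
    (LinearMap.range (blockOp 0 0 Γ) : Set (DirSum H₁ H₂)) with hO
  have hrange1 : Set.range Γ ⊆ (V₁ : Set H₁) := orbit_subset' _ _
  have hrange2 : Set.range (LinearMap.adjoint Γ) ⊆ (V₂ : Set H₂) := orbit_subset' _ _
  have hinv1 : ∀ x ∈ V₁, Ω₁ x ∈ V₁ := orbit_invariant _ _
  have hinv2 : ∀ y ∈ V₂, Ω₂ y ∈ V₂ := orbit_invariant _ _
  have hOinv : ∀ v ∈ O, blockOp Ω₁ Ω₂ Γ v ∈ O := orbit_invariant _ _
  have hOrange : (LinearMap.range (blockOp 0 0 Γ) : Set (DirSum H₁ H₂)) ⊆ (O : Set _) :=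
    orbit_subset' _ _
  -- the off-diagonal block maps into O
  have hcoup : ∀ v : DirSum H₁ H₂, blockOp 0 0 Γ v ∈ O :=
    fun v => hOrange ⟨v, rfl⟩
  have hemb2 : ∀ x : H₁, emb2 H₁ H₂ (LinearMap.adjoint Γ x) ∈ O := by
    intro x
    have := hcoup (emb1 H₁ H₂ x)
    simpa [blockOp_apply] using this
  have hemb1 : ∀ y : H₂, emb1 H₁ H₂ (Γ y) ∈ O := by
    intro y
    have := hcoup (emb2 H₁ H₂ y)
    simpa [blockOp_apply] using this
  have key : O = Submodule.map (emb1 H₁ H₂) V₁ ⊔ Submodule.map (emb2 H₁ H₂) V₂ := by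
    apply le_antisymm
    · apply orbit_le'
      · rintro _ ⟨v, rfl⟩
        rw [blockOp_apply]
        refine Submodule.add_mem _ ?_ ?_
        · apply Submodule.mem_sup_left
          refine ⟨_, ?_, rfl⟩
          simpa using hrange1 ⟨proj2 H₁ H₂ v, rfl⟩
        · apply Submodule.mem_sup_right
          refine ⟨_, ?_, rfl⟩
          simpa using hrange2 ⟨proj1 H₁ H₂ v, rfl⟩
      · intro v hv
        rcases Submodule.mem_sup.mp hv with ⟨a, ha, b, hb, rfl⟩
        rcases ha with ⟨x, hx, rfl⟩
        rcases hb with ⟨y, hy, rfl⟩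
        rw [map_add, blockOp_apply, blockOp_apply]
        simp only [proj1_emb1, proj2_emb1, proj1_emb2, proj2_emb2, map_zero,
          add_zero, zero_add]
        have m1 : emb1 H₁ H₂ (Ω₁ x) ∈
            Submodule.map (emb1 H₁ H₂) V₁ ⊔ Submodule.map (emb2 H₁ H₂) V₂ :=
          Submodule.mem_sup_left ⟨_, hinv1 x hx, rfl⟩
        have m2 : emb2 H₁ H₂ (LinearMap.adjoint Γ x) ∈
            Submodule.map (emb1 H₁ H₂) V₁ ⊔ Submodule.map (emb2 H₁ H₂) V₂ :=
          Submodule.mem_sup_right ⟨_, hrange2 ⟨x, rfl⟩, rfl⟩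
        have m3 : emb1 H₁ H₂ (Γ y) ∈
            Submodule.map (emb1 H₁ H₂) V₁ ⊔ Submodule.map (emb2 H₁ H₂) V₂ :=
          Submodule.mem_sup_left ⟨_, hrange1 ⟨y, rfl⟩, rfl⟩
        have m4 : emb2 H₁ H₂ (Ω₂ y) ∈
            Submodule.map (emb1 H₁ H₂) V₁ ⊔ Submodule.map (emb2 H₁ H₂) V₂ :=
          Submodule.mem_sup_right ⟨_, hinv2 y hy, rfl⟩
        exact Submodule.add_mem _ (Submodule.add_mem _ m1 m2) (Submodule.add_mem _ m3 m4)
    · apply sup_le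
      · rw [Submodule.map_le_iff_le_comap]
        apply orbit_le'
        · rintro _ ⟨y, rfl⟩
          exact hemb1 y
        · intro x hx
          have h1 : blockOp Ω₁ Ω₂ Γ (emb1 H₁ H₂ x) ∈ O := hOinv _ hx
          have h2 : emb2 H₁ H₂ (LinearMap.adjoint Γ x) ∈ O := hemb2 x
          have : emb1 H₁ H₂ (Ω₁ x) =
              blockOp Ω₁ Ω₂ Γ (emb1 H₁ H₂ x) - emb2 H₁ H₂ (LinearMap.adjoint Γ x) := by
            rw [blockOp_apply]; simp
          simpa [Submodule.mem_comap, this] using Submodule.sub_mem _ h1 h2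
      · rw [Submodule.map_le_iff_le_comap]
        apply orbit_le'
        · rintro _ ⟨x, rfl⟩
          exact hemb2 x
        · intro y hy
          have h1 : blockOp Ω₁ Ω₂ Γ (emb2 H₁ H₂ y) ∈ O := hOinv _ hy
          have h2 : emb1 H₁ H₂ (Γ y) ∈ O := hemb1 y
          have : emb2 H₁ H₂ (Ω₂ y) =
              blockOp Ω₁ Ω₂ Γ (emb2 H₁ H₂ y) - emb1 H₁ H₂ (Γ y) := by
            rw [blockOp_apply]; simp
          simpa [Submodule.mem_comap, this] using Submodule.sub_mem _ h1 h2
  refine ⟨?_, key⟩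
  rintro ⟨h1, h2⟩
  rw [key, h1, h2, Submodule.map_top, Submodule.map_top]
  rw [eq_top_iff]
  intro v _
  rw [← emb_decomp v]
  exact Submodule.add_mem _ (Submodule.mem_sup_left ⟨_, rfl⟩)
    (Submodule.mem_sup_right ⟨_, rfl⟩)
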